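/- Suppose a distribution D over ℝ^d × {±1} is linearly r-separated by f_{w,b} with robust margin γ_r (every point of S_r^+ ∪ S_r^-, the r-expanded supports, is at ℓ₂ distance ≥ γ_r from the decision hyperplane). After appending the coordinate R_S (the ℓ₂ diameter of the translated sample) to each translated sample point x - x₁, there exists a unit vector u ∈ ℝ^{d+1} such that for every sample point (xᵢ, yᵢ) and every z with ‖z - (xᵢ - x₁)‖_p ≤ r, ⟨u, yᵢ (z | R_S)⟩ ≥ γ_r/√2, provided the sample contains both a positive and a negative example. Moreover every augmented point satisfies ‖(xᵢ - x₁) | R_S‖₂ ≤ √2 · diam₂(D). -/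

import Mathlib

/-!
Translate the sample so that `x 0` is the origin; the separator becomes `⟪w, z⟫ = β` with
`β = b - ⟪w, x 0⟫`. Since the sample has a positive and a negative point, both within `R_S` of
the origin, the margin forces `|β| ≤ R_S - γ`. Absorbing the bias into the extra coordinate,
`u = (w | -β/R_S) / √(1 + (β/R_S)²)` separates the augmented points through the origin, and the
normalising factor is at most `√2` because `|β/R_S| ≤ 1`. The norm bound holds because both
`‖x i - x 0‖` and `R_S` are at most the diameter of the support.
-/

open Finset
open scoped ENNReal

/-- The standard inner product on `ℝ^d`. -/
def dotp {d : ℕ} (w x : Fin d → ℝ) : ℝ := ∑ i, w i * x i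

/-- The Euclidean (ℓ₂) norm on `ℝ^d`. -/
noncomputable def enorm2 {d : ℕ} (x : Fin d → ℝ) : ℝ := Real.sqrt (∑ i, x i ^ 2)

/-- The ℓ_p norm on `ℝ^d`. -/
noncomputable def pnorm (p : ℝ≥0∞) [Fact (1 ≤ p)] {d : ℕ} (x : Fin d → ℝ) : ℝ :=
  ‖(WithLp.equiv p (Fin d → ℝ)).symm x‖

section Euclidean

variable {d : ℕ}

lemma sq_enorm2 (v : Fin d → ℝ) : enorm2 v ^ 2 = ∑ i, v i ^ 2 :=
  Real.sq_sqrt (sum_nonneg fun _ _ => sq_nonneg _)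

lemma dotp_le_enorm2_mul (w v : Fin d → ℝ) : dotp w v ≤ enorm2 w * enorm2 v :=
  Real.sum_mul_le_sqrt_mul_sqrt _ _ _

lemma abs_dotp_le (w v : Fin d → ℝ) : |dotp w v| ≤ enorm2 w * enorm2 v := by
  have hneg : dotp (-w) v = -dotp w v := by simp [dotp]
  have hnorm : enorm2 (-w) = enorm2 w := by simp [enorm2]
  refine abs_le.mpr ⟨?_, dotp_le_enorm2_mul w v⟩
  have := dotp_le_enorm2_mul (-w) v
  rw [hneg, hnorm] at this
  linarith

lemma dotp_add_right (w a c : Fin d → ℝ) : dotp w (a + c) = dotp w a + dotp w c := by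
  simp [dotp, mul_add, sum_add_distrib]

lemma dotp_smul_left (t : ℝ) (u v : Fin d → ℝ) : dotp (t • u) v = t * dotp u v := by
  simp [dotp, mul_sum, mul_assoc]

lemma enorm2_smul (t : ℝ) (v : Fin d → ℝ) : enorm2 (t • v) = |t| * enorm2 v := by
  simp only [enorm2, Pi.smul_apply, smul_eq_mul, mul_pow, ← mul_sum]
  rw [Real.sqrt_mul (sq_nonneg t), Real.sqrt_sq_eq_abs]

lemma dotp_snoc (u v : Fin d → ℝ) (a t : ℝ) :
    dotp (Fin.snoc u a : Fin (d + 1) → ℝ) (Fin.snoc v t) = dotp u v + a * t := by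
  simp [dotp, Fin.sum_univ_castSucc]

lemma enorm2_snoc (v : Fin d → ℝ) (t : ℝ) :
    enorm2 (Fin.snoc v t : Fin (d + 1) → ℝ) = √(enorm2 v ^ 2 + t ^ 2) := by
  rw [sq_enorm2]
  simp [enorm2, Fin.sum_univ_castSucc]

lemma enorm2_snoc_le {v : Fin d → ℝ} {t D : ℝ} (hv : enorm2 v ≤ D) (ht : 0 ≤ t) (htD : t ≤ D) :
    enorm2 (Fin.snoc v t : Fin (d + 1) → ℝ) ≤ √2 * D := by
  have hD : 0 ≤ D := ht.trans htD
  calc enorm2 (Fin.snoc v t : Fin (d + 1) → ℝ) = √(enorm2 v ^ 2 + t ^ 2) := enorm2_snoc v t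
    _ ≤ √(2 * D ^ 2) := Real.sqrt_le_sqrt <| by
        have hv2 : enorm2 v ^ 2 ≤ D ^ 2 := pow_le_pow_left₀ (Real.sqrt_nonneg _) hv 2
        have ht2 : t ^ 2 ≤ D ^ 2 := pow_le_pow_left₀ ht htD 2
        linarith
    _ = √2 * D := by rw [Real.sqrt_mul zero_le_two, Real.sqrt_sq hD]

lemma pnorm_zero (p : ℝ≥0∞) [Fact (1 ≤ p)] : pnorm p (0 : Fin d → ℝ) = 0 := by
  simp [pnorm]

end Euclidean

section Tilt

variable {d : ℕ}

noncomputable def tiltedNormal (w : Fin d → ℝ) (c : ℝ) : Fin (d + 1) → ℝ :=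
  (√(1 + c ^ 2))⁻¹ • (Fin.snoc w (-c) : Fin (d + 1) → ℝ)

lemma enorm2_tiltedNormal {w : Fin d → ℝ} (hw : enorm2 w = 1) (c : ℝ) :
    enorm2 (tiltedNormal w c) = 1 := by
  have hpos : 0 < √(1 + c ^ 2) := Real.sqrt_pos.mpr (by positivity)
  rw [tiltedNormal, enorm2_smul, enorm2_snoc, hw, one_pow, neg_sq, abs_inv, abs_of_pos hpos,
    inv_mul_cancel₀ hpos.ne']

lemma dotp_tiltedNormal_snoc (w z : Fin d → ℝ) (c t : ℝ) :
    dotp (tiltedNormal w c) (Fin.snoc z t) = (dotp w z - c * t) / √(1 + c ^ 2) := by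
  rw [tiltedNormal, dotp_smul_left, dotp_snoc]
  ring

lemma div_sqrt_two_le_mul_dotp_tiltedNormal {w z : Fin d → ℝ} {c t y γ : ℝ} (hγ : 0 ≤ γ)
    (hc : |c| ≤ 1) (h : γ ≤ y * (dotp w z - c * t)) :
    γ / √2 ≤ y * dotp (tiltedNormal w c) (Fin.snoc z t) := by
  have hc2 : c ^ 2 ≤ 1 := (sq_le_one_iff_abs_le_one c).mpr hc
  rw [dotp_tiltedNormal_snoc, ← mul_div_assoc]
  calc γ / √2 ≤ γ / √(1 + c ^ 2) :=
        div_le_div_of_nonneg_left hγ (Real.sqrt_pos.mpr (by positivity))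
          (Real.sqrt_le_sqrt (by linarith))
    _ ≤ y * (dotp w z - c * t) / √(1 + c ^ 2) :=
        div_le_div_of_nonneg_right h (Real.sqrt_nonneg _)

end Tilt

section Separation

variable {d : ℕ} {p : ℝ≥0∞} [Fact (1 ≤ p)] {r γ b : ℝ} {P N : Set (Fin d → ℝ)}
  {w : Fin d → ℝ}

lemma le_mul_dotp_sub_of_separated
    (hsepP : ∀ x ∈ P, ∀ z, pnorm p (z - x) ≤ r → b + γ ≤ dotp w z)
    (hsepN : ∀ x ∈ N, ∀ z, pnorm p (z - x) ≤ r → dotp w z ≤ b - γ)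
    {x o z : Fin d → ℝ} {y : ℝ} (hxy : (y = 1 ∧ x ∈ P) ∨ (y = -1 ∧ x ∈ N))
    (hz : pnorm p (z - (x - o)) ≤ r) :
    γ ≤ y * (dotp w z - (b - dotp w o)) := by
  have hz' : pnorm p (z + o - x) ≤ r := by rwa [show z + o - x = z - (x - o) by abel]
  rcases hxy with ⟨rfl, hx⟩ | ⟨rfl, hx⟩
  · have := hsepP x hx _ hz'
    rw [dotp_add_right] at this
    linarith
  · have := hsepN x hx _ hz'
    rw [dotp_add_right] at this
    linarith

lemma abs_le_sub_of_margin {vp vn : Fin d → ℝ} {β R : ℝ} (hw : enorm2 w = 1)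
    (hvp : enorm2 vp ≤ R) (hvn : enorm2 vn ≤ R)
    (hpos : γ ≤ dotp w vp - β) (hneg : γ ≤ -(dotp w vn - β)) : |β| ≤ R - γ := by
  have hp := dotp_le_enorm2_mul w vp
  have hn := (abs_le.mp (abs_dotp_le w vn)).1
  rw [hw, one_mul] at hp hn
  exact abs_le.mpr ⟨by linarith, by linarith⟩

end Separation

theorem augmented_margin_general (d n : ℕ) (p : ℝ≥0∞) [Fact (1 ≤ p)]
    (r γ : ℝ) (hr : 0 < r) (hγ : 0 < γ)
    (P N : Set (Fin d → ℝ))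
    (w : Fin d → ℝ) (b : ℝ) (hw : enorm2 w = 1)
    (hsepP : ∀ x ∈ P, ∀ z, pnorm p (z - x) ≤ r → b + γ ≤ dotp w z)
    (hsepN : ∀ x ∈ N, ∀ z, pnorm p (z - x) ≤ r → dotp w z ≤ b - γ)
    (Ddiam : ℝ) (hDdiam : ∀ a ∈ P ∪ N, ∀ a' ∈ P ∪ N, enorm2 (a - a') ≤ Ddiam)
    (x : Fin (n + 1) → Fin d → ℝ) (y : Fin (n + 1) → ℝ)
    (hxy : ∀ i, (y i = 1 ∧ x i ∈ P) ∨ (y i = -1 ∧ x i ∈ N))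
    (hpos : ∃ i, y i = 1) (hneg : ∃ i, y i = -1)
    (RS : ℝ) (hRS : IsGreatest {t | ∃ i j, t = enorm2 (x i - x j)} RS) :
    ∃ u : Fin (d + 1) → ℝ, enorm2 u = 1 ∧
      (∀ i, ∀ z, pnorm p (z - (x i - x 0)) ≤ r →
        γ / Real.sqrt 2 ≤ y i * dotp u (Fin.snoc z RS)) ∧
      ∀ i, enorm2 (Fin.snoc (x i - x 0) RS) ≤ Real.sqrt 2 * Ddiam := by
  set β := b - dotp w (x 0)
  have hmargin : ∀ i z, pnorm p (z - (x i - x 0)) ≤ r → γ ≤ y i * (dotp w z - β) :=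
    fun i _ => le_mul_dotp_sub_of_separated hsepP hsepN (hxy i)
  have hself : ∀ i, γ ≤ y i * (dotp w (x i - x 0) - β) :=
    fun i => hmargin i _ (by rw [sub_self, pnorm_zero]; exact hr.le)
  have hle : ∀ i, enorm2 (x i - x 0) ≤ RS := fun i => hRS.2 ⟨i, 0, rfl⟩
  obtain ⟨ip, hip⟩ := hpos
  obtain ⟨jn, hjn⟩ := hneg
  have hβ : |β| ≤ RS - γ := abs_le_sub_of_margin hw (hle ip) (hle jn)
    (by simpa [hip] using hself ip) (by simpa [hjn] using hself jn)
  have hRS_pos : 0 < RS := by linarith [abs_nonneg β]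
  have hRS_le : RS ≤ Ddiam := by
    have hsample : ∀ i, x i ∈ P ∪ N := fun i => (hxy i).elim (Or.inl ·.2) (Or.inr ·.2)
    obtain ⟨i, j, rfl⟩ := hRS.1
    exact hDdiam _ (hsample i) _ (hsample j)
  refine ⟨tiltedNormal w (β / RS), enorm2_tiltedNormal hw _, fun i z hz => ?_,
    fun i => enorm2_snoc_le ((hle i).trans hRS_le) hRS_pos.le hRS_le⟩
  refine div_sqrt_two_le_mul_dotp_tiltedNormal hγ.le ?_ ?_
  · rw [abs_div, abs_of_pos hRS_pos, div_le_one hRS_pos]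
    linarith
  · rw [div_mul_cancel₀ _ hRS_pos.ne']
    exact hmargin i z hz

/-- If `D` (with positive/negative supports `P`, `N`) is linearly
`r`-separated with robust margin `γ_r` by `f_{w,b}`, then after translating the sample
by `x₁` and appending the coordinate `R_S` (the ℓ₂ diameter of the translated sample),
there is a unit vector `u ∈ ℝ^{d+1}` giving robust margin `γ_r/√2` through the origin
for all augmented sample points, provided the sample contains a positive and a negative
example; moreover every augmented point has ℓ₂ norm at most `√2 · diam₂(D)`. -/
theorem augmented_margin (d n : ℕ) (p : ℝ≥0∞) [Fact (1 ≤ p)] (hp : 1 < p)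
    (r γ : ℝ) (hr : 0 < r) (hγ : 0 < γ)
    (P N : Set (Fin d → ℝ))
    (w : Fin d → ℝ) (b : ℝ) (hw : enorm2 w = 1)
    (hsepP : ∀ x ∈ P, ∀ z, pnorm p (z - x) ≤ r → b + γ ≤ dotp w z)
    (hsepN : ∀ x ∈ N, ∀ z, pnorm p (z - x) ≤ r → dotp w z ≤ b - γ)
    (Ddiam : ℝ) (hDdiam : ∀ a ∈ P ∪ N, ∀ a' ∈ P ∪ N, enorm2 (a - a') ≤ Ddiam)
    (x : Fin (n + 1) → Fin d → ℝ) (y : Fin (n + 1) → ℝ)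
    (hxy : ∀ i, (y i = 1 ∧ x i ∈ P) ∨ (y i = -1 ∧ x i ∈ N))
    (hpos : ∃ i, y i = 1) (hneg : ∃ i, y i = -1)
    (RS : ℝ) (hRS : IsGreatest {t | ∃ i j, t = enorm2 (x i - x j)} RS) :
    ∃ u : Fin (d + 1) → ℝ, enorm2 u = 1 ∧
      (∀ i, ∀ z, pnorm p (z - (x i - x 0)) ≤ r →
        γ / Real.sqrt 2 ≤ y i * dotp u (Fin.snoc z RS)) ∧
      ∀ i, enorm2 (Fin.snoc (x i - x 0) RS) ≤ Real.sqrt 2 * Ddiam :=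
  augmented_margin_general d n p r γ hr hγ P N w b hw hsepP hsepN Ddiam hDdiam x y hxy hpos hneg RS
    hRS
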